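/- arXiv:1902.10600 — 3 statements merged into one kernel-verified Lean document; each statement's English description precedes it below -/
import Mathlib

section
/- Suppose there exist indices j, ℓ with log(p_j)/log(p_ℓ) irrational. Then the function s ↦ 1 − ∑_{j=1}^m b_j p_j^s of a complex variable s does not vanish for any s with Re(s) ≥ s_0 and s ≠ s_0, where s_0 is the positive real root of ∑ b_j p_j^s = 1. -/
open Finset

theorem stmt_4 (m : ℕ) (hm : 1 ≤ m) (b p : Fin m → ℝ)
    (hb : ∀ j, 0 < b j) (hsum : 1 < ∑ j, b j)
    (hp : ∀ j, p j ∈ Set.Ioo (0 : ℝ) 1)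
    (hirr : ∃ j ℓ, Irrational (Real.log (p j) / Real.log (p ℓ)))
    (s₀ : ℝ) (hs₀ : 0 < s₀) (hroot : ∑ j, b j * p j ^ s₀ = 1) :
    ∀ s : ℂ, s₀ ≤ s.re → s ≠ (s₀ : ℂ) →
      1 - ∑ j, (b j : ℂ) * Complex.exp (s * (Real.log (p j) : ℂ)) ≠ 0 := by
  intro s hre hne h0
  set σ := s.re with hσ
  set t := s.im with ht
  have hS : (∑ j, (b j : ℂ) * Complex.exp (s * (Real.log (p j) : ℂ))) = 1 :=
    (sub_eq_zero.mp h0).symm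
  -- real part of each term
  have hterm : ∀ j, ((b j : ℂ) * Complex.exp (s * (Real.log (p j) : ℂ))).re
      = b j * (p j ^ σ * Real.cos (t * Real.log (p j))) := by
    intro j
    have hre1 : (s * (Real.log (p j) : ℂ)).re = σ * Real.log (p j) := by simp [hσ]
    have him1 : (s * (Real.log (p j) : ℂ)).im = t * Real.log (p j) := by simp [ht]
    have hrp : Real.exp (σ * Real.log (p j)) = p j ^ σ := by
      rw [Real.rpow_def_of_pos (hp j).1, mul_comm]
    simp [Complex.mul_re, Complex.exp_re, Complex.exp_im, hre1, him1, hrp]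
  have h1 : ∑ j, b j * (p j ^ σ * Real.cos (t * Real.log (p j))) = 1 := by
    have := congrArg Complex.re hS
    simpa [Complex.re_sum, hterm] using this
  -- each term ≤ b j * p j ^ s₀
  have hle : ∀ j ∈ Finset.univ (α := Fin m),
      b j * (p j ^ σ * Real.cos (t * Real.log (p j))) ≤ b j * p j ^ s₀ := by
    intro j _
    have hp0 := (hp j).1
    have hp1 := (hp j).2
    have h2 : p j ^ σ ≤ p j ^ s₀ := Real.rpow_le_rpow_of_exponent_ge hp0 hp1.le hre
    have h3 : Real.cos (t * Real.log (p j)) ≤ 1 := Real.cos_le_one _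
    have h4 : (0:ℝ) < p j ^ σ := Real.rpow_pos_of_pos hp0 _
    have h5 : p j ^ σ * Real.cos (t * Real.log (p j)) ≤ p j ^ s₀ :=
      le_trans (by nlinarith) h2
    exact mul_le_mul_of_nonneg_left h5 (hb j).le
  have heq : ∀ j, b j * (p j ^ σ * Real.cos (t * Real.log (p j))) = b j * p j ^ s₀ := by
    have hsum' : ∑ j, b j * (p j ^ σ * Real.cos (t * Real.log (p j))) = ∑ j, b j * p j ^ s₀ := by
      rw [h1, hroot]
    intro j
    exact (Finset.sum_eq_sum_iff_of_le hle).mp hsum' j (Finset.mem_univ j)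
  have key : ∀ j, p j ^ σ * Real.cos (t * Real.log (p j)) = p j ^ s₀ := by
    intro j
    have := heq j
    exact mul_left_cancel₀ (ne_of_gt (hb j)) this
  -- σ = s₀
  have hσeq : σ = s₀ := by
    by_contra hne'
    have hlt : s₀ < σ := lt_of_le_of_ne hre (Ne.symm hne')
    obtain ⟨j, _, _⟩ := hirr
    have hp0 := (hp j).1
    have h2 : p j ^ σ < p j ^ s₀ := Real.rpow_lt_rpow_of_exponent_gt hp0 (hp j).2 hlt
    have h3 : Real.cos (t * Real.log (p j)) ≤ 1 := Real.cos_le_one _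
    have h4 : (0:ℝ) < p j ^ σ := Real.rpow_pos_of_pos hp0 _
    nlinarith [key j]
  have hcos : ∀ j, Real.cos (t * Real.log (p j)) = 1 := by
    intro j
    have := key j
    rw [hσeq] at this
    have h4 : (0:ℝ) < p j ^ s₀ := Real.rpow_pos_of_pos (hp j).1 _
    field_simp at this
    nlinarith
  have ht0 : t ≠ 0 := by
    intro h
    apply hne
    have : s = Complex.mk σ t := by rfl
    apply Complex.ext
    · simpa using hσeq
    · simpa using h
  obtain ⟨j, ℓ, hir⟩ := hirr
  obtain ⟨nj, hnj⟩ := (Real.cos_eq_one_iff _).mp (hcos j)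
  obtain ⟨nl, hnl⟩ := (Real.cos_eq_one_iff _).mp (hcos ℓ)
  have hlogℓ : Real.log (p ℓ) ≠ 0 := by
    have := Real.log_neg (hp ℓ).1 (hp ℓ).2
    linarith
  have hnl0 : (nl : ℝ) ≠ 0 := by
    intro h
    rw [h, zero_mul] at hnl
    exact (mul_ne_zero ht0 hlogℓ) hnl.symm
  have hratio : Real.log (p j) / Real.log (p ℓ) = (nj : ℝ) / (nl : ℝ) := by
    have hpi : (0:ℝ) < 2 * Real.pi := by positivity
    field_simp
    have : t * Real.log (p j) * (nl : ℝ) = t * Real.log (p ℓ) * (nj : ℝ) := by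
      rw [← hnj, ← hnl]; ring
    have := mul_left_cancel₀ ht0 (by linarith [this] : t * (Real.log (p j) * nl) = t * (Real.log (p ℓ) * nj))
    linarith [this]
  rw [hratio] at hir
  have : ¬ Irrational ((nj : ℝ) / (nl : ℝ)) := by
    have : ((nj / nl : ℚ) : ℝ) = (nj : ℝ) / (nl : ℝ) := by push_cast; ring
    rw [← this]
    exact Rat.not_irrational _
  exact this hir
end

section
/- Let (X_n) satisfy X_0 = a_0 and X_n = a_n + ∑_{j=1}^m b_j X_{⌊p_j n⌋} for n ≥ 1, where a_n = 0 for all n > n_0. If there is a constant C such that |X_k| ≤ C k^{s_0} for all 1 ≤ k ≤ max(n_0, max_j 1/p_j), then |X_k| ≤ C k^{s_0} for every positive integer k. -/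
/-! Beyond the initial range the recursion is homogeneous and every index `⌊p j k⌋` lies in
`[1, k)`, so strong induction applies: the bound `C ⌊p j k⌋ ^ s ≤ C p j ^ s k ^ s` summed
against the weights `b j` gives exactly `C k ^ s`, because `∑ b j p j ^ s = 1`. -/

open Finset

lemma one_le_floor_mul {p x : ℝ} (hp : 0 < p) (hx : 1 / p ≤ x) : 1 ≤ ⌊p * x⌋₊ := by
  rw [div_le_iff₀ hp] at hx
  exact Nat.le_floor (by rw [Nat.cast_one, mul_comm]; exact hx)

lemma floor_mul_lt_self {p : ℝ} (hp : p < 1) {n : ℕ} (hn : 0 < n) : ⌊p * n⌋₊ < n := by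
  have hn' : (0 : ℝ) < n := by exact_mod_cast hn
  exact (Nat.floor_lt' hn.ne').2 (by nlinarith)

section WeightedRecursion

variable {ι : Type*} [Fintype ι] {b p : ι → ℝ} {s C : ℝ}

lemma abs_sum_mul_floor_le (hb : ∀ j, 0 ≤ b j) (hp : ∀ j, p j ∈ Set.Ioo (0 : ℝ) 1)
    (hs : 0 ≤ s) (hroot : ∑ j, b j * p j ^ s = 1) (hC : 0 ≤ C) {X : ℕ → ℝ} {n : ℕ}
    (hX : ∀ j, |X ⌊p j * n⌋₊| ≤ C * (⌊p j * n⌋₊ : ℝ) ^ s) :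
    |∑ j, b j * X ⌊p j * n⌋₊| ≤ C * (n : ℝ) ^ s :=
  calc |∑ j, b j * X ⌊p j * n⌋₊|
      ≤ ∑ j, b j * |X ⌊p j * n⌋₊| := by
        refine (abs_sum_le_sum_abs _ _).trans_eq (sum_congr rfl fun j _ => ?_)
        rw [abs_mul, abs_of_nonneg (hb j)]
    _ ≤ ∑ j, b j * (C * (p j * n) ^ s) := by
        refine sum_le_sum fun j _ => mul_le_mul_of_nonneg_left ((hX j).trans ?_) (hb j)
        have hpn : 0 ≤ p j * n := mul_nonneg (hp j).1.le n.cast_nonneg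
        exact mul_le_mul_of_nonneg_left (Real.rpow_le_rpow (by positivity) (Nat.floor_le hpn) hs) hC
    _ = C * (n : ℝ) ^ s * ∑ j, b j * p j ^ s := by
        rw [mul_sum]
        refine sum_congr rfl fun j _ => ?_
        rw [Real.mul_rpow (hp j).1.le n.cast_nonneg]
        ring
    _ = C * (n : ℝ) ^ s := by rw [hroot, mul_one]

theorem abs_le_mul_rpow_of_eq_sum_mul_floor (hb : ∀ j, 0 ≤ b j)
    (hp : ∀ j, p j ∈ Set.Ioo (0 : ℝ) 1) (hs : 0 ≤ s) (hroot : ∑ j, b j * p j ^ s = 1)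
    {K : ℝ} (hK : ∀ j, 1 / p j ≤ K) {X : ℕ → ℝ}
    (hX : ∀ n : ℕ, K < n → X n = ∑ j, b j * X ⌊p j * n⌋₊)
    (hinit : ∀ k : ℕ, 1 ≤ k → (k : ℝ) ≤ K → |X k| ≤ C * (k : ℝ) ^ s) :
    ∀ k : ℕ, 1 ≤ k → |X k| ≤ C * (k : ℝ) ^ s := by
  obtain ⟨j₀⟩ : Nonempty ι := by
    by_contra h
    simp [not_nonempty_iff.mp h] at hroot
  have h1K : (1 : ℝ) ≤ K :=
    (one_le_one_div (hp j₀).1 (hp j₀).2.le).trans (hK j₀)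
  have hC : 0 ≤ C := by
    simpa using (abs_nonneg _).trans (hinit 1 le_rfl (by exact_mod_cast h1K))
  intro k
  induction k using Nat.strong_induction_on with
  | _ k ih =>
  intro hk
  rcases le_or_gt (k : ℝ) K with hkK | hKk
  · exact hinit k hk hkK
  rw [hX k hKk]
  refine abs_sum_mul_floor_le hb hp hs hroot hC fun j => ih _ ?_ ?_
  · exact floor_mul_lt_self (hp j).2 hk
  · exact one_le_floor_mul (hp j).1 ((hK j).trans hKk.le)

end WeightedRecursion

theorem stmt_5_general (m : ℕ) (b p : Fin m → ℝ)
    (hb : ∀ j, 0 < b j)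
    (hp : ∀ j, p j ∈ Set.Ioo (0 : ℝ) 1)
    (s₀ : ℝ) (hs₀ : 0 < s₀) (hroot : ∑ j, b j * p j ^ s₀ = 1)
    (n₀ : ℕ) (a : ℕ → ℝ) (ha : ∀ n, n₀ < n → a n = 0)
    (X : ℕ → ℝ)
    (hXrec : ∀ n : ℕ, 1 ≤ n → X n = a n + ∑ j, b j * X ⌊p j * n⌋₊)
    (C : ℝ)
    (hC : ∀ k : ℕ, 1 ≤ k → (k : ℝ) ≤ max (n₀ : ℝ) (⨆ j, 1 / p j) →
      |X k| ≤ C * (k : ℝ) ^ s₀) :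
    ∀ k : ℕ, 1 ≤ k → |X k| ≤ C * (k : ℝ) ^ s₀ := by
  refine abs_le_mul_rpow_of_eq_sum_mul_floor (fun j => (hb j).le) hp hs₀.le hroot
    (fun j => (le_ciSup (Set.finite_range fun j => 1 / p j).bddAbove j).trans (le_max_right _ _))
    (fun n hn => ?_) hC
  have hn₀ : n₀ < n := by exact_mod_cast (le_max_left _ _).trans_lt hn
  rw [hXrec n (by omega), ha n hn₀, zero_add]

theorem stmt_5 (m : ℕ) (hm : 1 ≤ m) (b p : Fin m → ℝ)
    (hb : ∀ j, 0 < b j) (hsum : 1 < ∑ j, b j)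
    (hp : ∀ j, p j ∈ Set.Ioo (0 : ℝ) 1)
    (s₀ : ℝ) (hs₀ : 0 < s₀) (hroot : ∑ j, b j * p j ^ s₀ = 1)
    (n₀ : ℕ) (a : ℕ → ℝ) (ha : ∀ n, n₀ < n → a n = 0)
    (X : ℕ → ℝ) (hX0 : X 0 = a 0)
    (hXrec : ∀ n : ℕ, 1 ≤ n → X n = a n + ∑ j, b j * X ⌊p j * n⌋₊)
    (C : ℝ)
    (hC : ∀ k : ℕ, 1 ≤ k → (k : ℝ) ≤ max (n₀ : ℝ) (⨆ j, 1 / p j) →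
      |X k| ≤ C * (k : ℝ) ^ s₀) :
    ∀ k : ℕ, 1 ≤ k → |X k| ≤ C * (k : ℝ) ^ s₀ :=
  stmt_5_general m b p hb hp s₀ hs₀ hroot n₀ a ha X hXrec C hC
end

section
/- If μ is a probability distribution on [0,∞) with E_μ(e^{αX}) < ∞ for some α > 0, then its n-fold convolution μ^{*n} is stochastically dominated by δ_{na} * Gamma(n, α), where a = (1/α) log E_μ(e^{αX}); i.e., if S_n is a sum of n i.i.d. μ-distributed variables and Z_n ~ Gamma(n, α) then P(S_n ≥ t) ≤ P(na + Z_n ≥ t) for all t. -/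
open MeasureTheory ProbabilityTheory Finset Real Set Filter Topology

-- Tail lower bound for the Gamma distribution
lemma gamma_tail_aux (m : ℕ) (r s : ℝ) (hr : 0 < r) (hs : 0 < s) :
    ENNReal.ofReal (Real.exp (-(r * s))) ≤ gammaMeasure (m + 1 : ℕ) r (Set.Ioi s) := by
  set n : ℕ := m + 1 with hn
  set S : ℝ → ℝ := fun x => ∑ k ∈ Finset.range n, (r * x) ^ k / (Nat.factorial k) with hS
  set g : ℝ → ℝ := fun x => -(Real.exp (-(r * x)) * S x) with hg
  have hderiv : ∀ x ∈ Set.Ici s, HasDerivAt g (gammaPDFReal (n : ℕ) r x) x := by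
    intro x hx
    have hx0 : 0 < x := lt_of_lt_of_le hs hx
    have hSder : HasDerivAt S (r * ∑ k ∈ Finset.range m, (r * x) ^ k / (Nat.factorial k)) x := by
      have : HasDerivAt S (∑ k ∈ Finset.range n,
          ((k : ℝ) * (r * x) ^ (k - 1) * r) / (Nat.factorial k)) x := by
        apply HasDerivAt.fun_sum
        intro k _
        simpa using (((hasDerivAt_id x).const_mul r).pow k).div_const ((Nat.factorial k : ℝ))
      convert this using 1
      rw [hn, Finset.sum_range_succ', Finset.mul_sum]
      simp only [Nat.cast_zero, zero_mul, zero_div, add_zero]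
      apply Finset.sum_congr rfl
      intro k _
      have hfk : ((Nat.factorial k : ℕ) : ℝ) ≠ 0 := Nat.cast_ne_zero.mpr k.factorial_ne_zero
      rw [Nat.add_sub_cancel, Nat.factorial_succ]
      push_cast
      field_simp
    have hEder : HasDerivAt (fun x => Real.exp (-(r * x))) (-r * Real.exp (-(r * x))) x := by
      have h := (((hasDerivAt_id x).const_mul r).neg).exp
      convert h using 1
      simp [mul_comm]
      simp only [Pi.neg_apply, id]
      ring
    have : HasDerivAt g _ x := (hEder.mul hSder).neg
    convert this using 1
    have hpdf : gammaPDFReal (n : ℕ) r x = r * Real.exp (-(r * x)) * (r * x) ^ m /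
        (Nat.factorial m) := by
      rw [gammaPDFReal, if_pos hx0.le]
      have h1 : ((n : ℕ) : ℝ) - 1 = (m : ℝ) := by push_cast [hn]; ring
      rw [h1]
      have h2 : (r : ℝ) ^ ((n : ℕ) : ℝ) = r ^ (n : ℕ) := by
        rw [Real.rpow_natCast]
      have h3 : x ^ (m : ℝ) = x ^ (m : ℕ) := by rw [Real.rpow_natCast]
      have h4 : Real.Gamma ((n : ℕ) : ℝ) = Nat.factorial m := by
        rw [hn]; push_cast; rw [Real.Gamma_nat_eq_factorial]
      rw [h2, h3, h4, hn]
      rw [mul_pow, pow_succ]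
      ring
    rw [hpdf, hS]
    have hfm : ((Nat.factorial m : ℕ) : ℝ) ≠ 0 := Nat.cast_ne_zero.mpr m.factorial_ne_zero
    simp only [hn, Finset.sum_range_succ]
    field_simp
    ring
  have hpos : ∀ x ∈ Set.Ioi s, 0 ≤ gammaPDFReal (n : ℕ) r x :=
    fun x _ => gammaPDFReal_nonneg (by positivity) hr x
  have htend : Tendsto g atTop (𝓝 0) := by
    have : Tendsto (fun x => Real.exp (-(r * x)) * S x) atTop (𝓝 0) := by
      have h0 : Tendsto (fun x => ∑ k ∈ Finset.range n,
          (r * x) ^ k * Real.exp (-(r * x)) / (Nat.factorial k)) atTop (𝓝 0) := by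
        have : Tendsto (fun y : ℝ => ∑ k ∈ Finset.range n,
            y ^ k * Real.exp (-y) / (Nat.factorial k)) atTop (𝓝 0) := by
          have : Tendsto (fun y : ℝ => ∑ k ∈ Finset.range n,
              y ^ k * Real.exp (-y) / (Nat.factorial k)) atTop
              (𝓝 (∑ k ∈ Finset.range n, 0)) := by
            apply tendsto_finset_sum
            intro k _
            simpa using (Real.tendsto_pow_mul_exp_neg_atTop_nhds_zero k).div_const
              ((Nat.factorial k : ℝ))
          simpa using this
        have hcomp : Tendsto (fun x : ℝ => r * x) atTop atTop :=
          Filter.Tendsto.const_mul_atTop hr Filter.tendsto_id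
        exact this.comp hcomp
      refine h0.congr (fun x => ?_)
      rw [hS, Finset.mul_sum]
      apply Finset.sum_congr rfl
      intro k _
      ring
    simpa using this.neg
  have hint := MeasureTheory.integral_Ioi_of_hasDerivAt_of_nonneg'
    (fun x hx => hderiv x hx) hpos htend
  have hIntOn : MeasureTheory.IntegrableOn (gammaPDFReal (n : ℕ) r) (Set.Ioi s) :=
    MeasureTheory.integrableOn_Ioi_deriv_of_nonneg' (fun x hx => hderiv x hx) hpos htend
  have hmeasval : gammaMeasure (n : ℕ) r (Set.Ioi s) =
      ENNReal.ofReal (∫ x in Set.Ioi s, gammaPDFReal (n : ℕ) r x) := by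
    rw [gammaMeasure, withDensity_apply _ measurableSet_Ioi]
    simp only [gammaPDF]
    rw [← MeasureTheory.ofReal_integral_eq_lintegral_ofReal hIntOn
      (Filter.Eventually.of_forall (fun x => gammaPDFReal_nonneg (by positivity) hr x))]
  rw [hmeasval, hint]
  apply ENNReal.ofReal_le_ofReal
  have hgs : g s = -(Real.exp (-(r * s)) * S s) := rfl
  rw [hgs]
  have hS1 : 1 ≤ S s := by
    rw [hS]
    simp only [hn, Finset.sum_range_succ', pow_zero, Nat.factorial_zero, Nat.cast_one, div_one]
    have : 0 ≤ ∑ k ∈ Finset.range m, (r * s) ^ (k + 1) / (Nat.factorial (k + 1)) := by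
      apply Finset.sum_nonneg
      intro k _
      positivity
    norm_num
    linarith
  nlinarith [Real.exp_pos (-(r * s))]

theorem stmt_19 {Ω Ω' : Type*} [MeasurableSpace Ω] [MeasurableSpace Ω']
    (P : Measure Ω) [IsProbabilityMeasure P]
    (P' : Measure Ω') [IsProbabilityMeasure P']
    (μ : Measure ℝ) [IsProbabilityMeasure μ]
    (hμpos : ∀ᵐ x ∂μ, 0 ≤ x)
    (α : ℝ) (hα : 0 < α)
    (hexp : Integrable (fun x => Real.exp (α * x)) μ)
    (a : ℝ) (ha : a = (1 / α) * Real.log (∫ x, Real.exp (α * x) ∂μ))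
    (n : ℕ) (hn : 1 ≤ n)
    (X : ℕ → Ω → ℝ) (hmeas : ∀ i, Measurable (X i))
    (hindep : iIndepFun X P)
    (hlaw : ∀ i, Measure.map (X i) P = μ)
    (Z : Ω' → ℝ) (hZ : Measure.map Z P' = gammaMeasure n α) :
    ∀ t : ℝ, P {ω | t ≤ ∑ i ∈ Finset.range n, X i ω} ≤
      P' {ω | t ≤ (n : ℝ) * a + Z ω} := by
  intro t
  obtain ⟨m, rfl⟩ : ∃ m, n = m + 1 := ⟨n - 1, (Nat.succ_pred_eq_of_pos hn).symm⟩
  have hnpos : (0 : ℝ) < ((m + 1 : ℕ) : ℝ) := by positivity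
  haveI : IsProbabilityMeasure (gammaMeasure (m + 1 : ℕ) α) :=
    isProbabilityMeasure_gammaMeasure hnpos hα
  -- Z is AEMeasurable
  have hZmeas : AEMeasurable Z P' := by
    by_contra h
    rw [Measure.map_of_not_aemeasurable h] at hZ
    have h1 : (gammaMeasure (m + 1 : ℕ) α) Set.univ = 1 := measure_univ
    rw [← hZ] at h1
    simp at h1
  -- rewrite RHS
  have hset : {ω | t ≤ ((m + 1 : ℕ) : ℝ) * a + Z ω} =
      Z ⁻¹' (Set.Ici (t - ((m + 1 : ℕ) : ℝ) * a)) := by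
    ext ω; simp [Set.mem_Ici]; constructor <;> intro h <;> linarith
  have hRHS : P' {ω | t ≤ ((m + 1 : ℕ) : ℝ) * a + Z ω} =
      gammaMeasure (m + 1 : ℕ) α (Set.Ici (t - ((m + 1 : ℕ) : ℝ) * a)) := by
    rw [hset, ← hZ, Measure.map_apply_of_aemeasurable hZmeas measurableSet_Ici]
  rw [hRHS]
  set s := t - ((m + 1 : ℕ) : ℝ) * a with hs
  rcases le_or_gt s 0 with hsle | hspos
  · -- tail is 1
    have h1 : gammaMeasure (m + 1 : ℕ) α (Set.Iio s) = 0 := by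
      rw [gammaMeasure, withDensity_apply _ measurableSet_Iio]
      exact lintegral_gammaPDF_of_nonpos hsle
    have h2 : gammaMeasure (m + 1 : ℕ) α (Set.Ici s) = 1 := by
      have := measure_add_measure_compl (μ := gammaMeasure (m + 1 : ℕ) α)
        (measurableSet_Iio (a := s))
      rw [compl_Iio, h1, zero_add] at this
      rw [this, measure_univ]
    rw [h2]
    exact prob_le_one
  · -- Chernoff bound
    have hI : ∀ i, ∫ ω, Real.exp (α * X i ω) ∂P = ∫ x, Real.exp (α * x) ∂μ := by
      intro i
      rw [← hlaw i, integral_map (hmeas i).aemeasurable]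
      exact (Real.continuous_exp.comp (continuous_const.mul continuous_id)).aestronglyMeasurable
    have hint_i : ∀ i, Integrable (fun ω => Real.exp (α * X i ω)) P := by
      intro i
      have : Integrable (fun x => Real.exp (α * x)) (Measure.map (X i) P) := by
        rw [hlaw i]; exact hexp
      exact this.comp_measurable (hmeas i) |>.congr (Filter.Eventually.of_forall fun ω => rfl)
    have hintS : Integrable (fun ω => Real.exp (α * (∑ i ∈ Finset.range (m+1), X i) ω)) P :=
      hindep.integrable_exp_mul_sum hmeas (fun i _ => hint_i i)
    have hcher := measure_ge_le_exp_mul_mgf (X := ∑ i ∈ Finset.range (m+1), X i)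
      (μ := P) t hα.le hintS
    have hmgf : mgf (∑ i ∈ Finset.range (m+1), X i) P α = (Real.exp (α * a)) ^ (m + 1) := by
      rw [hindep.mgf_sum hmeas]
      have hIpos : 0 < ∫ x, Real.exp (α * x) ∂μ := integral_exp_pos hexp
      have hmgf_i : ∀ i, mgf (X i) P α = Real.exp (α * a) := by
        intro i
        have hαa : α * a = Real.log (∫ x, Real.exp (α * x) ∂μ) := by
          rw [ha]; field_simp
        rw [mgf, hI i, hαa, Real.exp_log hIpos]
      simp only [hmgf_i]
      rw [Finset.prod_const, Finset.card_range]
    rw [hmgf] at hcher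
    have hexpval : Real.exp (-α * t) * Real.exp (α * a) ^ (m + 1) = Real.exp (-(α * s)) := by
      rw [← Real.exp_nat_mul, ← Real.exp_add, hs]
      congr 1
      push_cast
      ring
    rw [hexpval] at hcher
    have hLHS : P {ω | t ≤ ∑ i ∈ Finset.range (m+1), X i ω} ≤
        ENNReal.ofReal (Real.exp (-(α * s))) := by
      rw [ENNReal.le_ofReal_iff_toReal_le (measure_ne_top _ _) (Real.exp_pos _).le]
      rw [← measureReal_def]
      convert hcher using 3
      ext ω
      simp
    refine hLHS.trans ?_
    refine (gamma_tail_aux m α s hα hspos).trans ?_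
    exact measure_mono Set.Ioi_subset_Ici_self
end
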